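/- For n ≥ 2, the number of preference lists α ∈ [n]^n with exactly n−1 lucky cars in which the unique unlucky car is unable to park equals ∑_{i=2}^n ∑_{ℓ=1}^{i−1} ℓ·C(i−1,ℓ)·ℓ!·C(n−ℓ−1, i−1−ℓ)·(i−1−ℓ)!·C(n−i+1, n−i)·(n−i)!, where C(a,b) denotes the binomial coefficient. -/

import Mathlib

open Finset

/-- The first unoccupied spot numbered greater than or equal to `p`, if any. -/
def nextSpot {n : ℕ} (occ : Finset (Fin n)) (p : Fin n) : Option (Fin n) :=
  if h : (Finset.univ.filter (fun s : Fin n => p ≤ s ∧ s ∉ occ)).Nonempty then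
    some ((Finset.univ.filter (fun s : Fin n => p ≤ s ∧ s ∉ occ)).min' h)
  else none

/-- The set of occupied spots after the first `k` cars have tried to park,
given the preference list `α`. -/
def occupiedAfter {n : ℕ} (α : Fin n → Fin n) : ℕ → Finset (Fin n)
  | 0 => ∅
  | k + 1 =>
    if h : k < n then
      match nextSpot (occupiedAfter α k) (α ⟨k, h⟩) with
      | some s => insert s (occupiedAfter α k)
      | none => occupiedAfter α k
    else occupiedAfter α k

/-- The spot in which car `i` parks (cars numbered `0,…,n-1` enter in order),
or `none` if car `i` is unable to park. -/
def carSpot {n : ℕ} (α : Fin n → Fin n) (i : Fin n) : Option (Fin n) :=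
  nextSpot (occupiedAfter α i.val) (α i)

/-- The number of lucky cars: cars parking exactly in their preferred spot. -/
def luckyCount {n : ℕ} (α : Fin n → Fin n) : ℕ :=
  (Finset.univ.filter (fun i : Fin n => carSpot α i = some (α i))).card

/-- `L n` is the number of preference lists in `[n]^n` with exactly `n - 1` lucky cars. -/
def luckyL (n : ℕ) : ℕ :=
  (Finset.univ.filter
    (fun α : Fin n → Fin n => (luckyCount α : ℤ) = (n : ℤ) - 1)).card

/-- The `n`th harmonic number. -/
noncomputable def H (n : ℕ) : ℝ := ∑ i ∈ Finset.Icc 1 n, (1 : ℝ) / i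


open scoped Classical

variable {n : ℕ}

-- Part 1 lemmas

lemma nextSpot_eq_some_self {occ : Finset (Fin n)} {p : Fin n} :
    nextSpot occ p = some p ↔ p ∉ occ := by
  constructor
  · intro h
    unfold nextSpot at h
    split at h
    · rename_i hne
      have hm := Finset.min'_mem _ hne
      rw [Option.some_inj] at h
      rw [h] at hm
      exact (Finset.mem_filter.mp hm).2.2
    · exact nomatch h
  · intro hp
    have hmem : p ∈ Finset.univ.filter (fun s : Fin n => p ≤ s ∧ s ∉ occ) := by
      simp [hp]
    have hne : (Finset.univ.filter (fun s : Fin n => p ≤ s ∧ s ∉ occ)).Nonempty := ⟨p, hmem⟩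
    unfold nextSpot
    rw [dif_pos hne, Option.some_inj]
    apply le_antisymm (Finset.min'_le _ _ hmem)
    exact (Finset.mem_filter.mp (Finset.min'_mem _ hne)).2.1

lemma nextSpot_eq_none_iff {occ : Finset (Fin n)} {p : Fin n} :
    nextSpot occ p = none ↔ ∀ s, p ≤ s → s ∈ occ := by
  unfold nextSpot
  split
  · rename_i hne
    obtain ⟨s, hs⟩ := hne
    rw [Finset.mem_filter] at hs
    constructor
    · intro h; exact nomatch h
    · intro h; exact absurd (h s hs.2.1) hs.2.2
  · rename_i hne
    simp only [true_iff]
    rw [Finset.not_nonempty_iff_eq_empty, Finset.filter_eq_empty_iff] at hne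
    intro s hs
    by_contra hmem
    exact hne (Finset.mem_univ s) ⟨hs, hmem⟩

lemma occupiedAfter_succ_eq (α : Fin n → Fin n) (k : ℕ) :
    occupiedAfter α (k + 1) = if h : k < n then
      (match nextSpot (occupiedAfter α k) (α ⟨k, h⟩) with
       | some s => insert s (occupiedAfter α k)
       | none => occupiedAfter α k)
    else occupiedAfter α k := rfl

lemma occupiedAfter_succ_some {α : Fin n → Fin n} {k : ℕ} (h : k < n) {s : Fin n}
    (hs : nextSpot (occupiedAfter α k) (α ⟨k, h⟩) = some s) :
    occupiedAfter α (k + 1) = insert s (occupiedAfter α k) := by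
  rw [occupiedAfter_succ_eq, dif_pos h, hs]

lemma occupiedAfter_succ_none {α : Fin n → Fin n} {k : ℕ} (h : k < n)
    (hs : nextSpot (occupiedAfter α k) (α ⟨k, h⟩) = none) :
    occupiedAfter α (k + 1) = occupiedAfter α k := by
  rw [occupiedAfter_succ_eq, dif_pos h, hs]

lemma occupiedAfter_subset_succ (α : Fin n → Fin n) (k : ℕ) :
    occupiedAfter α k ⊆ occupiedAfter α (k + 1) := by
  by_cases h : k < n
  · cases hs : nextSpot (occupiedAfter α k) (α ⟨k, h⟩) with
    | none => rw [occupiedAfter_succ_none h hs]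
    | some s => rw [occupiedAfter_succ_some h hs]; exact Finset.subset_insert _ _
  · rw [occupiedAfter_succ_eq, dif_neg h]

lemma occupiedAfter_mono (α : Fin n → Fin n) {k l : ℕ} (h : k ≤ l) :
    occupiedAfter α k ⊆ occupiedAfter α l := by
  induction l with
  | zero => simpa [Nat.le_zero.mp h] using subset_rfl
  | succ m ih =>
    rcases Nat.lt_or_ge k (m + 1) with h' | h'
    · exact (ih (Nat.lt_succ_iff.mp h')).trans (occupiedAfter_subset_succ α m)
    · have : k = m + 1 := le_antisymm h h'
      rw [this]

lemma mem_occupiedAfter_of_carSpot {α : Fin n → Fin n} {i : Fin n} {s : Fin n}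
    (h : carSpot α i = some s) {k : ℕ} (hk : i.val < k) : s ∈ occupiedAfter α k := by
  have h1 : occupiedAfter α (i.val + 1) = insert s (occupiedAfter α i.val) := by
    apply occupiedAfter_succ_some i.isLt
    rwa [Fin.eta]
  exact occupiedAfter_mono α hk (h1 ▸ Finset.mem_insert_self s _)

lemma lucky_iff {α : Fin n → Fin n} {i : Fin n} :
    carSpot α i = some (α i) ↔ α i ∉ occupiedAfter α i.val :=
  nextSpot_eq_some_self

/-- The key structural predicate. -/
def Q {n : ℕ} (u : Fin n) (α : Fin n → Fin n) : Prop :=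
  Set.InjOn α {i | i ≠ u} ∧ ∀ s, α u ≤ s → ∃ j, j < u ∧ α j = s

lemma occ_formula {α : Fin n → Fin n} {u : Fin n}
    (hl : ∀ j : Fin n, j ≠ u → carSpot α j = some (α j))
    (hu : carSpot α u = none) (k : ℕ) :
    occupiedAfter α k = (Finset.univ.filter fun j : Fin n => j.val < k ∧ j ≠ u).image α := by
  induction k with
  | zero => simp [occupiedAfter]
  | succ m ih =>
    by_cases hm : m < n
    · by_cases he : (⟨m, hm⟩ : Fin n) = u
      · have hnone : nextSpot (occupiedAfter α m) (α ⟨m, hm⟩) = none := by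
          have h2 : carSpot α u = nextSpot (occupiedAfter α u.val) (α u) := rfl
          rw [h2] at hu
          rw [← he] at hu
          exact hu
        rw [occupiedAfter_succ_none hm hnone, ih]
        congr 1
        ext j
        simp only [Finset.mem_filter, Finset.mem_univ, true_and]
        constructor
        · rintro ⟨h1, h2⟩; exact ⟨Nat.lt_succ_of_lt h1, h2⟩
        · rintro ⟨h1, h2⟩
          refine ⟨?_, h2⟩
          rcases Nat.lt_succ_iff_lt_or_eq.mp h1 with h | h
          · exact h
          · exact absurd (he ▸ Fin.ext h : j = u) h2
      · have hsome : nextSpot (occupiedAfter α m) (α ⟨m, hm⟩) = some (α ⟨m, hm⟩) :=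
          hl ⟨m, hm⟩ he
        rw [occupiedAfter_succ_some hm hsome, ih]
        have hset : (Finset.univ.filter fun j : Fin n => j.val < m + 1 ∧ j ≠ u)
            = insert ⟨m, hm⟩ (Finset.univ.filter fun j : Fin n => j.val < m ∧ j ≠ u) := by
          ext j
          simp only [Finset.mem_insert, Finset.mem_filter, Finset.mem_univ, true_and]
          constructor
          · rintro ⟨h1, h2⟩
            rcases Nat.lt_succ_iff_lt_or_eq.mp h1 with h | h
            · exact Or.inr ⟨h, h2⟩
            · exact Or.inl (Fin.ext h)
          · rintro (rfl | ⟨h1, h2⟩)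
            · exact ⟨Nat.lt_succ_self m, he⟩
            · exact ⟨Nat.lt_succ_of_lt h1, h2⟩
        rw [hset, Finset.image_insert]
    · rw [occupiedAfter_succ_eq, dif_neg hm, ih]
      congr 1
      ext j
      simp only [Finset.mem_filter, Finset.mem_univ, true_and, and_congr_left_iff]
      intro _
      have := j.isLt
      omega

lemma occ_formula_Q {α : Fin n → Fin n} {u : Fin n} (h : Q u α) (k : ℕ) :
    occupiedAfter α k = (Finset.univ.filter fun j : Fin n => j.val < k ∧ j ≠ u).image α := by
  induction k with
  | zero => simp [occupiedAfter]
  | succ m ih =>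
    by_cases hm : m < n
    · by_cases he : (⟨m, hm⟩ : Fin n) = u
      · have hnone : nextSpot (occupiedAfter α m) (α ⟨m, hm⟩) = none := by
          rw [nextSpot_eq_none_iff]
          intro s hs
          rw [he] at hs
          obtain ⟨j, hj, hja⟩ := h.2 s hs
          rw [ih]
          refine Finset.mem_image.mpr ⟨j, Finset.mem_filter.mpr ⟨Finset.mem_univ j, ?_, ?_⟩, hja⟩
          · have : j.val < u.val := hj
            have : u.val = m := by rw [← he]
            omega
          · exact ne_of_lt hj
        rw [occupiedAfter_succ_none hm hnone, ih]
        congr 1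
        ext j
        simp only [Finset.mem_filter, Finset.mem_univ, true_and]
        constructor
        · rintro ⟨h1, h2⟩; exact ⟨Nat.lt_succ_of_lt h1, h2⟩
        · rintro ⟨h1, h2⟩
          refine ⟨?_, h2⟩
          rcases Nat.lt_succ_iff_lt_or_eq.mp h1 with h' | h'
          · exact h'
          · exact absurd (he ▸ Fin.ext h' : j = u) h2
      · have hsome : nextSpot (occupiedAfter α m) (α ⟨m, hm⟩) = some (α ⟨m, hm⟩) := by
          rw [nextSpot_eq_some_self, ih]
          intro hmem
          obtain ⟨j, hj, hja⟩ := Finset.mem_image.mp hmem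
          rw [Finset.mem_filter] at hj
          have hje : j = ⟨m, hm⟩ := h.1 hj.2.2 he hja
          have hv : j.val < m := hj.2.1
          rw [hje] at hv
          exact Nat.lt_irrefl m hv
        rw [occupiedAfter_succ_some hm hsome, ih]
        have hset : (Finset.univ.filter fun j : Fin n => j.val < m + 1 ∧ j ≠ u)
            = insert ⟨m, hm⟩ (Finset.univ.filter fun j : Fin n => j.val < m ∧ j ≠ u) := by
          ext j
          simp only [Finset.mem_insert, Finset.mem_filter, Finset.mem_univ, true_and]
          constructor
          · rintro ⟨h1, h2⟩
            rcases Nat.lt_succ_iff_lt_or_eq.mp h1 with h' | h'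
            · exact Or.inr ⟨h', h2⟩
            · exact Or.inl (Fin.ext h')
          · rintro (rfl | ⟨h1, h2⟩)
            · exact ⟨Nat.lt_succ_self m, he⟩
            · exact ⟨Nat.lt_succ_of_lt h1, h2⟩
        rw [hset, Finset.image_insert]
    · rw [occupiedAfter_succ_eq, dif_neg hm, ih]
      congr 1
      ext j
      simp only [Finset.mem_filter, Finset.mem_univ, true_and, and_congr_left_iff]
      intro _
      have := j.isLt
      omega

lemma Q_carSpot_none {α : Fin n → Fin n} {u : Fin n} (h : Q u α) : carSpot α u = none := by
  show nextSpot (occupiedAfter α u.val) (α u) = none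
  rw [occ_formula_Q h, nextSpot_eq_none_iff]
  intro s hs
  obtain ⟨j, hj, hja⟩ := h.2 s hs
  exact Finset.mem_image.mpr ⟨j, Finset.mem_filter.mpr ⟨Finset.mem_univ j, hj, ne_of_lt hj⟩, hja⟩

lemma Q_lucky {α : Fin n → Fin n} {u : Fin n} (h : Q u α) {j : Fin n} (hj : j ≠ u) :
    carSpot α j = some (α j) := by
  rw [lucky_iff, occ_formula_Q h]
  intro hmem
  obtain ⟨j', hj', hja⟩ := Finset.mem_image.mp hmem
  rw [Finset.mem_filter] at hj'
  have : j' = j := h.1 hj'.2.2 hj hja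
  omega

lemma Q_unique {α : Fin n → Fin n} {u u' : Fin n} (h : Q u α) (h' : Q u' α) : u = u' := by
  by_contra hne
  have h1 := Q_lucky h' (show u ≠ u' from hne)
  have h2 := Q_carSpot_none h
  rw [h2] at h1
  exact nomatch h1

theorem pred_iff_Q (hn : 1 ≤ n) (α : Fin n → Fin n) :
    ((luckyCount α : ℤ) = (n : ℤ) - 1 ∧ ∃ i, carSpot α i = none) ↔ ∃ u, Q u α := by
  constructor
  · rintro ⟨hc, i₀, hi₀⟩
    have hcn : luckyCount α = n - 1 := by omega
    have hsum := Finset.card_filter_add_card_filter_not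
      (s := (Finset.univ : Finset (Fin n)))
      (p := fun i : Fin n => carSpot α i = some (α i))
    have hcard : (Finset.univ.filter fun i : Fin n => ¬ carSpot α i = some (α i)).card = 1 := by
      rw [Finset.card_univ, Fintype.card_fin] at hsum
      have : luckyCount α = (Finset.univ.filter fun i : Fin n => carSpot α i = some (α i)).card := rfl
      omega
    obtain ⟨x, hx⟩ := Finset.card_eq_one.mp hcard
    have hi₀mem : i₀ ∈ Finset.univ.filter fun i : Fin n => ¬ carSpot α i = some (α i) := by
      simp only [Finset.mem_filter, Finset.mem_univ, true_and]
      rw [hi₀]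
      exact fun h => nomatch h
    have hx0 : x = i₀ := by
      have := hx ▸ hi₀mem
      exact (Finset.mem_singleton.mp this).symm
    have hlucky : ∀ j : Fin n, j ≠ i₀ → carSpot α j = some (α j) := by
      intro j hj
      by_contra hc'
      have : j ∈ Finset.univ.filter fun i : Fin n => ¬ carSpot α i = some (α i) := by
        simp only [Finset.mem_filter, Finset.mem_univ, true_and]; exact hc'
      rw [hx, hx0] at this
      exact hj (Finset.mem_singleton.mp this)
    refine ⟨i₀, ?_, ?_⟩
    · intro j hj j' hj' heq
      by_contra hne
      rcases lt_or_gt_of_ne (show j ≠ j' from hne) with hlt | hlt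
      · have h1 : α j ∈ occupiedAfter α j'.val :=
          mem_occupiedAfter_of_carSpot (hlucky j hj) hlt
        have h2 := lucky_iff.mp (hlucky j' hj')
        rw [heq] at h1
        exact h2 h1
      · have h1 : α j' ∈ occupiedAfter α j.val :=
          mem_occupiedAfter_of_carSpot (hlucky j' hj') hlt
        have h2 := lucky_iff.mp (hlucky j hj)
        rw [← heq] at h1
        exact h2 h1
    · intro s hs
      have hu : nextSpot (occupiedAfter α i₀.val) (α i₀) = none := hi₀
      rw [occ_formula (u := i₀) hlucky hi₀, nextSpot_eq_none_iff] at hu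
      obtain ⟨j, hj, hja⟩ := Finset.mem_image.mp (hu s hs)
      rw [Finset.mem_filter] at hj
      exact ⟨j, hj.2.1, hja⟩
  · rintro ⟨u, hQ⟩
    have hfilter : (Finset.univ.filter fun i : Fin n => carSpot α i = some (α i))
        = Finset.univ.erase u := by
      ext i
      simp only [Finset.mem_filter, Finset.mem_univ, true_and, Finset.mem_erase, and_true]
      constructor
      · intro hl
        intro heq
        rw [heq, Q_carSpot_none hQ] at hl
        exact nomatch hl
      · exact fun hi => Q_lucky hQ hi
    have hcard : luckyCount α = n - 1 := by
      show (Finset.univ.filter fun i : Fin n => carSpot α i = some (α i)).card = n - 1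
      rw [hfilter, Finset.card_erase_of_mem (Finset.mem_univ u), Finset.card_univ,
        Fintype.card_fin]
    refine ⟨by omega, u, Q_carSpot_none hQ⟩

lemma count_ext (s : Finset (Fin n)) :
    ∀ (T : Finset (Fin n)) (g : Fin n → Fin n),
    (Finset.univ.filter fun f : Fin n → Fin n =>
       (∀ i ∈ s, f i ∈ T) ∧ Set.InjOn f ↑s ∧ ∀ i ∉ s, f i = g i).card
      = T.card.descFactorial s.card := by
  induction s using Finset.induction_on with
  | empty =>
    intro T g
    have : (Finset.univ.filter fun f : Fin n → Fin n =>
       (∀ i ∈ (∅ : Finset (Fin n)), f i ∈ T) ∧ Set.InjOn f ↑(∅ : Finset (Fin n))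
         ∧ ∀ i ∉ (∅ : Finset (Fin n)), f i = g i) = {g} := by
      ext f
      simp only [Finset.mem_filter, Finset.mem_univ, true_and, Finset.mem_singleton]
      constructor
      · rintro ⟨-, -, h⟩; funext i; exact h i (Finset.notMem_empty i)
      · rintro rfl
        exact ⟨fun i hi => absurd hi (Finset.notMem_empty i), by simp,
          fun i _ => rfl⟩
    rw [this]
    simp
  | @insert a s' ha ih =>
    intro T g
    rw [Finset.card_eq_sum_card_fiberwise (f := fun f : Fin n → Fin n => f a) (t := T)
      (fun f hf => by
        rw [Finset.mem_coe, Finset.mem_filter] at hf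
        exact hf.2.1 a (Finset.mem_insert_self a s'))]
    have hfib : ∀ v ∈ T,
        ((Finset.univ.filter fun f : Fin n → Fin n =>
           (∀ i ∈ insert a s', f i ∈ T) ∧ Set.InjOn f ↑(insert a s')
             ∧ ∀ i ∉ insert a s', f i = g i).filter fun f => f a = v)
        = (Finset.univ.filter fun f : Fin n → Fin n =>
           (∀ i ∈ s', f i ∈ T.erase v) ∧ Set.InjOn f ↑s'
             ∧ ∀ i ∉ s', f i = Function.update g a v i) := by
      intro v hv
      ext f
      rw [Finset.filter_filter]
      simp only [Finset.mem_filter, Finset.mem_univ, true_and]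
      constructor
      · rintro ⟨⟨hmem, hinj, hoff⟩, hfa⟩
        refine ⟨?_, ?_, ?_⟩
        · intro i hi
          refine Finset.mem_erase.mpr ⟨?_, hmem i (Finset.mem_insert_of_mem hi)⟩
          intro heq
          have : i = a := hinj (by simp [hi]) (by simp) (by rw [heq, hfa])
          exact ha (this ▸ hi)
        · exact hinj.mono (by simp [Finset.coe_insert, Set.subset_insert])
        · intro i hi
          by_cases hia : i = a
          · rw [hia, hfa, Function.update_self]
          · rw [Function.update_of_ne hia]
            exact hoff i (by simp [hia, hi])
      · rintro ⟨hmem, hinj, hoff⟩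
        have hfa : f a = v := by
          have := hoff a ha
          rwa [Function.update_self] at this
        refine ⟨⟨?_, ?_, ?_⟩, hfa⟩
        · intro i hi
          rcases Finset.mem_insert.mp hi with rfl | hi'
          · rw [hfa]; exact hv
          · exact Finset.mem_of_mem_erase (hmem i hi')
        · rw [Finset.coe_insert, Set.injOn_insert (by simpa using ha)]
          refine ⟨hinj, ?_⟩
          rintro ⟨i, hi, hfi⟩
          have := hmem i hi
          rw [hfi, hfa] at this
          exact (Finset.mem_erase.mp this).1 rfl
        · intro i hi
          rw [Finset.mem_insert, not_or] at hi
          have := hoff i hi.2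
          rwa [Function.update_of_ne hi.1] at this
    calc ∑ v ∈ T, ((Finset.univ.filter fun f : Fin n → Fin n =>
           (∀ i ∈ insert a s', f i ∈ T) ∧ Set.InjOn f ↑(insert a s')
             ∧ ∀ i ∉ insert a s', f i = g i).filter fun f => f a = v).card
        = ∑ v ∈ T, (T.erase v).card.descFactorial s'.card := by
          refine Finset.sum_congr rfl fun v hv => ?_
          rw [hfib v hv, ih]
      _ = T.card * (T.card - 1).descFactorial s'.card := by
          rw [Finset.sum_congr rfl fun v hv => by rw [Finset.card_erase_of_mem hv]]
          rw [Finset.sum_const, smul_eq_mul]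
      _ = T.card.descFactorial (insert a s').card := by
          rw [Finset.card_insert_of_notMem ha]
          cases hT : T.card with
          | zero => simp
          | succ c => rw [Nat.succ_descFactorial_succ]; simp

lemma count_two (s₁ s₂ T₁ T₂ : Finset (Fin n)) (hs : Disjoint s₁ s₂) (hT : Disjoint T₁ T₂)
    (g : Fin n → Fin n) :
    (Finset.univ.filter fun f : Fin n → Fin n =>
       (∀ i ∈ s₁, f i ∈ T₁) ∧ (∀ i ∈ s₂, f i ∈ T₂) ∧ Set.InjOn f ↑(s₁ ∪ s₂)
         ∧ ∀ i ∉ s₁ ∪ s₂, f i = g i).card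
      = T₁.card.descFactorial s₁.card * T₂.card.descFactorial s₂.card := by
  set t := Finset.univ.filter fun c : Fin n → Fin n =>
       (∀ i ∈ s₁, c i ∈ T₁) ∧ Set.InjOn c ↑s₁ ∧ ∀ i ∉ s₁, c i = g i with ht
  have hmap : ∀ f ∈ (Finset.univ.filter fun f : Fin n → Fin n =>
       (∀ i ∈ s₁, f i ∈ T₁) ∧ (∀ i ∈ s₂, f i ∈ T₂) ∧ Set.InjOn f ↑(s₁ ∪ s₂)
         ∧ ∀ i ∉ s₁ ∪ s₂, f i = g i),
      (fun i => if i ∈ s₁ then f i else g i) ∈ t := by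
    intro f hf
    rw [Finset.mem_filter] at hf
    obtain ⟨-, h1, h2, h3, h4⟩ := hf
    rw [ht, Finset.mem_filter]
    refine ⟨Finset.mem_univ _, fun i hi => by simp [hi, h1 i hi], ?_, fun i hi => by simp [hi]⟩
    intro x hx y hy hxy
    have hx' : x ∈ s₁ := hx
    have hy' : y ∈ s₁ := hy
    simp only [if_pos hx', if_pos hy'] at hxy
    exact h3 (by simp [hx']) (by simp [hy']) hxy
  rw [Finset.card_eq_sum_card_fiberwise hmap]
  have hfib : ∀ c ∈ t,
      ((Finset.univ.filter fun f : Fin n → Fin n =>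
       (∀ i ∈ s₁, f i ∈ T₁) ∧ (∀ i ∈ s₂, f i ∈ T₂) ∧ Set.InjOn f ↑(s₁ ∪ s₂)
         ∧ ∀ i ∉ s₁ ∪ s₂, f i = g i).filter
        fun f => (fun i => if i ∈ s₁ then f i else g i) = c)
      = Finset.univ.filter fun f : Fin n → Fin n =>
       (∀ i ∈ s₂, f i ∈ T₂) ∧ Set.InjOn f ↑s₂ ∧ ∀ i ∉ s₂, f i = c i := by
    intro c hc
    rw [ht, Finset.mem_filter] at hc
    obtain ⟨-, hc1, hc2, hc3⟩ := hc
    ext f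
    rw [Finset.filter_filter]
    simp only [Finset.mem_filter, Finset.mem_univ, true_and]
    constructor
    · rintro ⟨⟨h1, h2, h3, h4⟩, h5⟩
      refine ⟨h2, h3.mono (by intro x hx; simp only [Finset.coe_union]; exact Set.mem_union_right _ hx), ?_⟩
      intro i hi
      by_cases hi1 : i ∈ s₁
      · have := congrFun h5 i
        simpa [hi1] using this
      · have := congrFun h5 i
        simp only [if_neg hi1] at this
        rw [← this]
        exact h4 i (by simp [hi1, hi])
    · rintro ⟨h1, h2, h3⟩
      have hval : ∀ i ∈ s₁, f i = c i := by
        intro i hi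
        exact h3 i (Finset.disjoint_left.mp hs hi)
      refine ⟨⟨?_, h1, ?_, ?_⟩, ?_⟩
      · intro i hi; rw [hval i hi]; exact hc1 i hi
      · rw [Finset.coe_union]
        rw [Set.injOn_union (by simpa using Finset.disjoint_coe.mpr hs)]
        refine ⟨?_, h2, ?_⟩
        · intro x hx y hy hxy
          exact hc2 hx hy (by rw [← hval x hx, ← hval y hy, hxy])
        · intro x hx y hy heq
          have hx1 : f x ∈ T₁ := by rw [hval x hx]; exact hc1 x hx
          have hy2 : f y ∈ T₂ := h1 y hy
          rw [heq] at hx1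
          exact Finset.disjoint_left.mp hT hx1 hy2
      · intro i hi
        rw [Finset.mem_union, not_or] at hi
        rw [h3 i hi.2, hc3 i hi.1]
      · funext i
        by_cases hi1 : i ∈ s₁
        · rw [if_pos hi1, hval i hi1]
        · rw [if_neg hi1, (hc3 i hi1).symm]
  calc ∑ c ∈ t, _ = ∑ c ∈ t, T₂.card.descFactorial s₂.card := by
        refine Finset.sum_congr rfl fun c hc => ?_
        rw [hfib c hc, count_ext]
    _ = T₁.card.descFactorial s₁.card * T₂.card.descFactorial s₂.card := by
        rw [Finset.sum_const, smul_eq_mul, ht, count_ext]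

lemma Y_card (u t : Fin n) (B : Finset (Fin n)) (hB : B ∈ (Finset.Iio u).powersetCard (n - t.val)) :
    (Finset.univ.filter fun α : Fin n → Fin n =>
      (Q u α ∧ α u = t) ∧ (Finset.Iio u).filter (fun j => t ≤ α j) = B).card
    = (n - t.val).factorial * (t.val).descFactorial (n - (n - t.val) - 1) := by
  rw [Finset.mem_powersetCard] at hB
  obtain ⟨hBsub, hBcard⟩ := hB
  have huB : u ∉ B := fun h => lt_irrefl u (Finset.mem_Iio.mp (hBsub h))
  set s₂ : Finset (Fin n) := Finset.univ \ insert u B with hs₂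
  have hs₂mem : ∀ x : Fin n, x ∈ s₂ ↔ x ≠ u ∧ x ∉ B := by
    intro x
    rw [hs₂, Finset.mem_sdiff, Finset.mem_insert]
    simp [not_or]
  have hunion : ∀ x : Fin n, x ∈ B ∪ s₂ ↔ x ≠ u := by
    intro x
    rw [Finset.mem_union, hs₂mem]
    constructor
    · rintro (h | h)
      · rintro rfl; exact huB h
      · exact h.1
    · intro h
      by_cases hxB : x ∈ B
      · exact Or.inl hxB
      · exact Or.inr ⟨h, hxB⟩
  have hsdisj : Disjoint B s₂ := by
    rw [Finset.disjoint_left]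
    intro x hx hx2
    exact ((hs₂mem x).mp hx2).2 hx
  have hTdisj : Disjoint (Finset.Ici t) (Finset.Iio t) := by
    rw [Finset.disjoint_left]
    intro x hx hx2
    exact absurd (Finset.mem_Iio.mp hx2) (not_lt.mpr (Finset.mem_Ici.mp hx))
  have hseteq : (Finset.univ.filter fun α : Fin n → Fin n =>
      (Q u α ∧ α u = t) ∧ (Finset.Iio u).filter (fun j => t ≤ α j) = B)
      = Finset.univ.filter fun α : Fin n → Fin n =>
       (∀ i ∈ B, α i ∈ Finset.Ici t) ∧ (∀ i ∈ s₂, α i ∈ Finset.Iio t)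
         ∧ Set.InjOn α ↑(B ∪ s₂) ∧ ∀ i ∉ B ∪ s₂, α i = (fun _ => t) i := by
    ext α
    simp only [Finset.mem_filter, Finset.mem_univ, true_and]
    constructor
    · rintro ⟨⟨hQ, hαu⟩, hfB⟩
      refine ⟨?_, ?_, ?_, ?_⟩
      · intro i hi
        rw [← hfB, Finset.mem_filter] at hi
        exact Finset.mem_Ici.mpr hi.2
      · intro i hi
        rw [hs₂mem] at hi
        rw [Finset.mem_Iio]
        by_contra hge
        have hti : t ≤ α i := not_lt.mp hge
        rcases lt_or_gt_of_ne hi.1 with hlt | hgt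
        · exact hi.2 (by rw [← hfB, Finset.mem_filter]; exact ⟨Finset.mem_Iio.mpr hlt, hti⟩)
        · obtain ⟨j, hj, hja⟩ := hQ.2 (α i) (by rw [hαu]; exact hti)
          have : j = i := hQ.1 (ne_of_lt hj) hi.1 hja
          rw [this] at hj
          exact absurd hgt (not_lt.mpr (le_of_lt hj))
      · apply hQ.1.mono
        intro x hx
        exact (hunion x).mp (Finset.mem_coe.mp hx)
      · intro i hi
        have : i = u := by
          by_contra hne
          exact hi ((hunion i).mpr hne)
        rw [this, hαu]
    · rintro ⟨h1, h2, h3, h4⟩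
      have hαu : α u = t := h4 u (fun h => ((hunion u).mp h) rfl)
      have hinjB : Set.InjOn α ↑B := h3.mono (by
        intro x hx
        simp only [Finset.coe_union]
        exact Set.mem_union_left _ hx)
      have himage : B.image α = Finset.Ici t := by
        apply Finset.eq_of_subset_of_card_le
        · intro x hx
          obtain ⟨j, hj, hja⟩ := Finset.mem_image.mp hx
          exact hja ▸ h1 j hj
        · rw [Finset.card_image_of_injOn hinjB, hBcard, Fin.card_Ici]
      refine ⟨⟨⟨?_, ?_⟩, hαu⟩, ?_⟩
      · apply h3.mono
        intro x hx
        exact Finset.mem_coe.mpr ((hunion x).mpr hx)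
      · intro s hs
        rw [hαu] at hs
        have : s ∈ B.image α := himage ▸ Finset.mem_Ici.mpr hs
        obtain ⟨j, hj, hja⟩ := Finset.mem_image.mp this
        exact ⟨j, Finset.mem_Iio.mp (hBsub hj), hja⟩
      · ext j
        rw [Finset.mem_filter]
        constructor
        · rintro ⟨hj, hjt⟩
          by_contra hjB
          have hj2 : j ∈ s₂ := (hs₂mem j).mpr ⟨ne_of_lt (Finset.mem_Iio.mp hj), hjB⟩
          exact absurd (Finset.mem_Iio.mp (h2 j hj2)) (not_lt.mpr hjt)
        · intro hj
          exact ⟨hBsub hj, Finset.mem_Ici.mp (h1 j hj)⟩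
  rw [hseteq, count_two B s₂ (Finset.Ici t) (Finset.Iio t) hsdisj hTdisj]
  rw [Fin.card_Ici, Fin.card_Iio, hBcard, Nat.descFactorial_self]
  congr 2
  rw [hs₂, Finset.card_sdiff_of_subset (Finset.subset_univ _), Finset.card_univ, Fintype.card_fin,
    Finset.card_insert_of_notMem huB, hBcard]
  omega

lemma X_card (u t : Fin n) :
    (Finset.univ.filter fun α : Fin n → Fin n => Q u α ∧ α u = t).card
    = u.val.choose (n - t.val) *
        ((n - t.val).factorial * (t.val).descFactorial (n - (n - t.val) - 1)) := by
  have hmap : ∀ α ∈ (Finset.univ.filter fun α : Fin n → Fin n => Q u α ∧ α u = t),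
      (Finset.Iio u).filter (fun j => t ≤ α j) ∈ (Finset.Iio u).powersetCard (n - t.val) := by
    intro α hα
    rw [Finset.mem_filter] at hα
    obtain ⟨-, hQ, hαu⟩ := hα
    rw [Finset.mem_powersetCard]
    refine ⟨Finset.filter_subset _ _, ?_⟩
    have hinj : Set.InjOn α ↑((Finset.Iio u).filter (fun j => t ≤ α j)) := by
      apply hQ.1.mono
      intro x hx
      have := Finset.mem_coe.mp hx
      rw [Finset.mem_filter, Finset.mem_Iio] at this
      exact ne_of_lt this.1
    have himage : ((Finset.Iio u).filter (fun j => t ≤ α j)).image α = Finset.Ici t := by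
      apply Finset.Subset.antisymm
      · intro x hx
        obtain ⟨j, hj, hja⟩ := Finset.mem_image.mp hx
        rw [Finset.mem_filter] at hj
        exact Finset.mem_Ici.mpr (hja ▸ hj.2)
      · intro s hs
        obtain ⟨j, hj, hja⟩ := hQ.2 s (by rw [hαu]; exact Finset.mem_Ici.mp hs)
        refine Finset.mem_image.mpr ⟨j, ?_, hja⟩
        rw [Finset.mem_filter, Finset.mem_Iio]
        exact ⟨hj, by rw [hja]; exact Finset.mem_Ici.mp hs⟩
    have := Finset.card_image_of_injOn hinj
    rw [himage, Fin.card_Ici] at this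
    omega
  rw [Finset.card_eq_sum_card_fiberwise hmap]
  have : ∀ B ∈ (Finset.Iio u).powersetCard (n - t.val),
      ((Finset.univ.filter fun α : Fin n → Fin n => Q u α ∧ α u = t).filter
        (fun α => (Finset.Iio u).filter (fun j => t ≤ α j) = B)).card
      = (n - t.val).factorial * (t.val).descFactorial (n - (n - t.val) - 1) := by
    intro B hB
    rw [Finset.filter_filter]
    exact Y_card u t B hB
  rw [Finset.sum_congr rfl this, Finset.sum_const, smul_eq_mul,
    Finset.card_powersetCard, Fin.card_Iio]

lemma A_card (u : Fin n) :
    (Finset.univ.filter fun α : Fin n → Fin n => Q u α).card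
    = ∑ t : Fin n, u.val.choose (n - t.val) *
        ((n - t.val).factorial * (t.val).descFactorial (n - (n - t.val) - 1)) := by
  rw [Finset.card_eq_sum_card_fiberwise
    (f := fun α : Fin n → Fin n => α u) (t := Finset.univ) (fun α _ => Finset.mem_univ _)]
  refine Finset.sum_congr rfl fun t _ => ?_
  rw [Finset.filter_filter]
  exact X_card u t

lemma total_card (hn : 1 ≤ n) :
    (Finset.univ.filter (fun α : Fin n → Fin n =>
        (luckyCount α : ℤ) = (n : ℤ) - 1 ∧ ∃ i : Fin n, carSpot α i = none)).card
    = ∑ u : Fin n, ∑ t : Fin n, u.val.choose (n - t.val) *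
        ((n - t.val).factorial * (t.val).descFactorial (n - (n - t.val) - 1)) := by
  have hset : (Finset.univ.filter (fun α : Fin n → Fin n =>
        (luckyCount α : ℤ) = (n : ℤ) - 1 ∧ ∃ i : Fin n, carSpot α i = none))
      = Finset.univ.biUnion (fun u : Fin n => Finset.univ.filter fun α => Q u α) := by
    ext α
    rw [Finset.mem_biUnion, Finset.mem_filter]
    constructor
    · rintro ⟨-, h⟩
      obtain ⟨u, hu⟩ := (pred_iff_Q hn α).mp h
      exact ⟨u, Finset.mem_univ u, Finset.mem_filter.mpr ⟨Finset.mem_univ α, hu⟩⟩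
    · rintro ⟨u, -, hu⟩
      exact ⟨Finset.mem_univ α, (pred_iff_Q hn α).mpr ⟨u, (Finset.mem_filter.mp hu).2⟩⟩
  rw [hset, Finset.card_biUnion]
  · exact Finset.sum_congr rfl fun u _ => A_card u
  · intro u _ u' _ hne
    rw [Function.onFun, Finset.disjoint_left]
    intro α hα hα'
    exact hne (Q_unique (Finset.mem_filter.mp hα).2 (Finset.mem_filter.mp hα').2)

lemma sum_choose_fact (m N : ℕ) (h : m ≤ N) :
    ∑ k ∈ range (m+1), m.choose k * (k.factorial * (N-k).factorial)
      = m.factorial * ((N-m).factorial * (N+1).choose m) := by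
  have hterm : ∀ k ∈ range (m+1),
      m.choose k * (k.factorial * (N-k).factorial)
        = m.factorial * ((N-m).factorial * (N-k).choose (m-k)) := by
    intro k hk
    rw [mem_range] at hk
    have hkm : k ≤ m := by omega
    have h1 : m.choose k * k.factorial * (m-k).factorial = m.factorial :=
      Nat.choose_mul_factorial_mul_factorial hkm
    have h2 : (N-k).choose (m-k) * (m-k).factorial * ((N-k)-(m-k)).factorial
        = (N-k).factorial := Nat.choose_mul_factorial_mul_factorial (by omega)
    have h3 : (N-k)-(m-k) = N-m := by omega
    rw [h3] at h2
    calc m.choose k * (k.factorial * (N-k).factorial)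
        = m.choose k * (k.factorial *
            ((N-k).choose (m-k) * (m-k).factorial * (N-m).factorial)) := by rw [h2]
      _ = (m.choose k * k.factorial * (m-k).factorial) *
            ((N-m).factorial * (N-k).choose (m-k)) := by ring
      _ = m.factorial * ((N-m).factorial * (N-k).choose (m-k)) := by rw [h1]
  rw [Finset.sum_congr rfl hterm, ← Finset.mul_sum, ← Finset.mul_sum]
  congr 2
  have hreflect : ∑ k ∈ range (m+1), (N-k).choose (m-k)
      = ∑ j ∈ range (m+1), (N-m+j).choose j := by
    rw [← Finset.sum_range_reflect (fun j => (N-m+j).choose j) (m+1)]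
    refine Finset.sum_congr rfl fun k hk => ?_
    rw [mem_range] at hk
    congr 1 <;> omega
  rw [hreflect]
  have hsymm : ∀ j ∈ range (m+1), (N-m+j).choose j = (N-m+j).choose (N-m) := by
    intro j hj
    have := Nat.choose_symm (show N-m ≤ N-m+j by omega) (n := N-m+j)
    rw [show N-m+j-(N-m) = j by omega] at this
    exact this
  rw [Finset.sum_congr rfl hsymm]
  have hIcc : ∑ j ∈ range (m+1), (N-m+j).choose (N-m)
      = ∑ i ∈ Icc (N-m) N, i.choose (N-m) := by
    refine Finset.sum_nbij' (fun j => N-m+j) (fun i => i-(N-m)) ?_ ?_ ?_ ?_ ?_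
    · intro j hj; rw [mem_range] at hj; show N-m+j ∈ Icc (N-m) N; rw [mem_Icc]; omega
    · intro i hi; rw [mem_Icc] at hi; show i-(N-m) ∈ range (m+1); rw [mem_range]; omega
    · intro j hj; rw [mem_range] at hj; show N-m+j-(N-m) = j; omega
    · intro i hi; rw [mem_Icc] at hi; show N-m+(i-(N-m)) = i; omega
    · intro j hj; rfl
  rw [hIcc, Nat.sum_Icc_choose]
  have := Nat.choose_symm (show N-m+1 ≤ N+1 by omega) (n := N+1)
  rw [show N+1-(N-m+1) = m by omega] at this
  exact this.symm

lemma sum_choose_fact_Icc (m N : ℕ) (h : m ≤ N) :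
    N.factorial + ∑ k ∈ Icc 1 m, m.choose k * (k.factorial * (N-k).factorial)
      = m.factorial * ((N-m).factorial * (N+1).choose m) := by
  rw [← sum_choose_fact m N h]
  have hins : range (m+1) = insert 0 (Icc 1 m) := by
    ext x; rw [mem_range, mem_insert, mem_Icc]; omega
  rw [hins, Finset.sum_insert (by simp)]
  simp

lemma inner_eq (m r : ℕ) (hm : 1 ≤ m) :
    ∑ k ∈ Icc 1 m, m.choose k * (k.factorial * (m+r+1-k).factorial)
      = (r+1) * ∑ ℓ ∈ Icc 1 m, ℓ * (m.choose ℓ * (ℓ.factorial * (m+r-ℓ).factorial)) := by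
  set F := ∑ k ∈ Icc 1 m, m.choose k * (k.factorial * (m+r+1-k).factorial) with hFdef
  set GS := ∑ ℓ ∈ Icc 1 m, ℓ * (m.choose ℓ * (ℓ.factorial * (m+r-ℓ).factorial)) with hGSdef
  set SA := ∑ ℓ ∈ Icc 1 m, m.choose ℓ * (ℓ.factorial * (m+r-ℓ).factorial) with hSAdef
  set SB := ∑ ℓ ∈ Icc 1 m, (m-1).choose ℓ * (ℓ.factorial * (m+r-ℓ).factorial) with hSBdef
  set Bc := (m+r+1).choose m with hBcdef
  set Cc := (m+r+1).choose (m-1) with hCcdef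
  have hF : (m+r+1).factorial + F = m.factorial * ((r+1).factorial * (m+r+2).choose m) := by
    have h := sum_choose_fact_Icc m (m+r+1) (by omega)
    rwa [show m+r+1-m = r+1 by omega, show m+r+1+1 = m+r+2 by omega] at h
  have hSA' : (m+r).factorial + SA = m.factorial * (r.factorial * Bc) := by
    have h := sum_choose_fact_Icc m (m+r) (by omega)
    rwa [show m+r-m = r by omega] at h
  have hSB1 : SB = ∑ ℓ ∈ Icc 1 (m-1), (m-1).choose ℓ * (ℓ.factorial * (m+r-ℓ).factorial) := by
    rw [hSBdef]
    symm
    apply Finset.sum_subset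
    · intro x hx; rw [mem_Icc] at *; omega
    · intro x hx hx2
      rw [mem_Icc] at hx hx2
      have hlt : m - 1 < x := by omega
      rw [Nat.choose_eq_zero_of_lt hlt, zero_mul]
  have hSB' : (m+r).factorial + SB = (m-1).factorial * ((r+1).factorial * Cc) := by
    rw [hSB1]
    have h := sum_choose_fact_Icc (m-1) (m+r) (by omega)
    rwa [show m+r-(m-1) = r+1 by omega] at h
  have htermsum : GS + m * SB = m * SA := by
    rw [hGSdef, hSBdef, hSAdef, Finset.mul_sum, Finset.mul_sum, ← Finset.sum_add_distrib]
    refine Finset.sum_congr rfl fun ℓ hℓ => ?_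
    rw [mem_Icc] at hℓ
    have h1 : m * (m-1).choose ℓ = m.choose ℓ * (m - ℓ) := by
      have ha := Nat.add_one_mul_choose_eq (m-1) ℓ
      rw [Nat.sub_add_cancel hm] at ha
      exact ha.trans (Nat.choose_succ_right_eq m ℓ)
    have h2 : ℓ * m.choose ℓ + m * (m-1).choose ℓ = m * m.choose ℓ := by
      rw [h1]
      have : ℓ * m.choose ℓ + m.choose ℓ * (m - ℓ) = (ℓ + (m - ℓ)) * m.choose ℓ := by ring
      rw [this, show ℓ + (m - ℓ) = m by omega]
    calc ℓ * (m.choose ℓ * (ℓ.factorial * (m+r-ℓ).factorial))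
          + m * ((m-1).choose ℓ * (ℓ.factorial * (m+r-ℓ).factorial))
        = (ℓ * m.choose ℓ + m * (m-1).choose ℓ) * (ℓ.factorial * (m+r-ℓ).factorial) := by ring
      _ = (m * m.choose ℓ) * (ℓ.factorial * (m+r-ℓ).factorial) := by rw [h2]
      _ = m * (m.choose ℓ * (ℓ.factorial * (m+r-ℓ).factorial)) := by ring
  have hfact : (m+r+1).factorial = Bc * (m.factorial * (r+1).factorial) := by
    have h := Nat.choose_mul_factorial_mul_factorial (show m ≤ m+r+1 by omega)
    rw [show m+r+1-m = r+1 by omega] at h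
    rw [← h, hBcdef]; ring
  have hP : (m+r+2).choose m = Cc + Bc := by
    obtain ⟨c, rfl⟩ : ∃ c, m = c + 1 := ⟨m-1, by omega⟩
    rw [hBcdef, hCcdef]
    simp only [Nat.add_sub_cancel]
    rw [show c+1+r+2 = (c+1+r+1)+1 by omega, Nat.choose_succ_succ]
  have hkey : m * Bc = (r+2) * Cc := by
    obtain ⟨c, rfl⟩ : ∃ c, m = c + 1 := ⟨m-1, by omega⟩
    have h := Nat.choose_succ_right_eq (c+1+r+1) c
    rw [hBcdef, hCcdef]
    simp only [Nat.add_sub_cancel]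
    rw [show c+1+r+1-c = r+2 by omega] at h
    calc (c+1) * (c+1+r+1).choose (c+1) = (c+1+r+1).choose (c+1) * (c+1) := by ring
      _ = (c+1+r+1).choose c * (r+2) := h
      _ = (r+2) * (c+1+r+1).choose c := by ring
  -- F = m! * ((r+1)! * Cc)
  have hF2 : F = m.factorial * ((r+1).factorial * Cc) := by
    have h10 : (m+r+1).factorial + F
        = (m+r+1).factorial + m.factorial * ((r+1).factorial * Cc) := by
      calc (m+r+1).factorial + F = m.factorial * ((r+1).factorial * (m+r+2).choose m) := hF
        _ = m.factorial * ((r+1).factorial * (Cc + Bc)) := by rw [hP]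
        _ = Bc * (m.factorial * (r+1).factorial)
              + m.factorial * ((r+1).factorial * Cc) := by ring
        _ = (m+r+1).factorial + m.factorial * ((r+1).factorial * Cc) := by rw [hfact]
    exact Nat.add_left_cancel h10
  -- GS = m! * (r! * Cc)
  have hGS2 : GS = m.factorial * (r.factorial * Cc) := by
    have hmf : m * (m-1).factorial = m.factorial := Nat.mul_factorial_pred (by omega)
    have h20 : GS + m * ((m+r).factorial + SB) = m * ((m+r).factorial + SA) := by
      calc GS + m * ((m+r).factorial + SB)
          = (GS + m * SB) + m * (m+r).factorial := by ring
        _ = m * SA + m * (m+r).factorial := by rw [htermsum]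
        _ = m * ((m+r).factorial + SA) := by ring
    rw [hSB', hSA'] at h20
    have h21 : GS + m.factorial * (r.factorial * ((r+1) * Cc))
        = m.factorial * (r.factorial * ((r+2) * Cc)) := by
      calc GS + m.factorial * (r.factorial * ((r+1) * Cc))
          = GS + (m * (m-1).factorial) * ((r+1).factorial * Cc) := by
            rw [hmf, Nat.factorial_succ]; ring
        _ = GS + m * ((m-1).factorial * ((r+1).factorial * Cc)) := by ring
        _ = m * (m.factorial * (r.factorial * Bc)) := h20
        _ = m.factorial * (r.factorial * ((m * Bc))) := by ring
        _ = m.factorial * (r.factorial * ((r+2) * Cc)) := by rw [hkey]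
    have h22 : m.factorial * (r.factorial * ((r+2) * Cc))
        = m.factorial * (r.factorial * ((r+1) * Cc)) + m.factorial * (r.factorial * Cc) := by
      ring
    rw [h22] at h21
    omega
  rw [hF2, hGS2, Nat.factorial_succ]
  ring

lemma descfac (b : ℕ) : b.descFactorial (b-1) = b.factorial := by
  cases b with
  | zero => rfl
  | succ c =>
    have h := Nat.descFactorial_self (c+1)
    rw [Nat.descFactorial_succ] at h
    simpa using h

lemma final_sum (n : ℕ) (hn : 2 ≤ n) :
    ∑ u : Fin n, ∑ t : Fin n, (u:ℕ).choose (n - (t:ℕ)) *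
        ((n - (t:ℕ)).factorial * ((t:ℕ)).descFactorial (n - (n - (t:ℕ)) - 1))
    = ∑ i ∈ Icc 2 n, ∑ ℓ ∈ Icc 1 (i-1),
        ℓ * Nat.choose (i-1) ℓ * Nat.factorial ℓ * Nat.choose (n-ℓ-1) (i-1-ℓ)
          * Nat.factorial (i-1-ℓ) * Nat.choose (n-i+1) (n-i) * Nat.factorial (n-i) := by
  rw [Fin.sum_univ_eq_sum_range (fun a : ℕ => ∑ t : Fin n, a.choose (n - (t:ℕ)) *
    ((n - (t:ℕ)).factorial * ((t:ℕ)).descFactorial (n - (n - (t:ℕ)) - 1))) n]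
  have step1 : ∀ a ∈ range n,
      (∑ t : Fin n, (a:ℕ).choose (n - (t:ℕ)) *
        ((n - (t:ℕ)).factorial * ((t:ℕ)).descFactorial (n - (n - (t:ℕ)) - 1)))
      = ∑ k ∈ Icc 1 a, a.choose k * (k.factorial * (n-k).factorial) := by
    intro a ha
    rw [mem_range] at ha
    rw [Fin.sum_univ_eq_sum_range (fun b : ℕ => a.choose (n - b) *
      ((n - b).factorial * b.descFactorial (n - (n - b) - 1))) n]
    have h1 : ∀ b ∈ range n,
        a.choose (n - b) * ((n - b).factorial * b.descFactorial (n - (n - b) - 1))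
        = a.choose (n-b) * ((n-b).factorial * (n-(n-b)).factorial) := by
      intro b hb
      rw [mem_range] at hb
      rw [show n - (n-b) = b by omega, descfac]
    rw [Finset.sum_congr rfl h1]
    have h2 : ∑ b ∈ range n, a.choose (n-b) * ((n-b).factorial * (n-(n-b)).factorial)
        = ∑ k ∈ Icc 1 n, a.choose k * (k.factorial * (n-k).factorial) := by
      refine Finset.sum_nbij' (fun b => n - b) (fun k => n - k) ?_ ?_ ?_ ?_ ?_
      · intro b hb; rw [mem_range] at hb; show n - b ∈ Icc 1 n; rw [mem_Icc]; omega
      · intro k hk; rw [mem_Icc] at hk; show n - k ∈ range n; rw [mem_range]; omega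
      · intro b hb; rw [mem_range] at hb; show n - (n - b) = b; omega
      · intro k hk; rw [mem_Icc] at hk; show n - (n - k) = k; omega
      · intro b hb; rfl
    rw [h2]
    symm
    apply Finset.sum_subset
    · intro x hx; rw [mem_Icc] at *; omega
    · intro x hx hx2
      rw [mem_Icc] at hx hx2
      rw [Nat.choose_eq_zero_of_lt (by omega), zero_mul]
  rw [Finset.sum_congr rfl step1]
  have hins : range n = insert 0 (Icc 1 (n-1)) := by
    ext x; rw [mem_range, mem_insert, mem_Icc]; omega
  rw [hins, Finset.sum_insert (by simp), show Icc 1 0 = (∅ : Finset ℕ) by rfl,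
    Finset.sum_empty, zero_add]
  symm
  refine Finset.sum_nbij' (fun i => i - 1) (fun a => a + 1) ?_ ?_ ?_ ?_ ?_
  · intro i hi; rw [mem_Icc] at hi; show i - 1 ∈ Icc 1 (n-1); rw [mem_Icc]; omega
  · intro a ha; rw [mem_Icc] at ha; show a + 1 ∈ Icc 2 n; rw [mem_Icc]; omega
  · intro i hi; rw [mem_Icc] at hi; show i - 1 + 1 = i; omega
  · intro a ha; rw [mem_Icc] at ha; show a + 1 - 1 = a; omega
  · intro i hi
    rw [mem_Icc] at hi
    show (∑ ℓ ∈ Icc 1 (i-1), _) = ∑ k ∈ Icc 1 (i-1), (i-1).choose k * (k.factorial * (n-k).factorial)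
    set a := i - 1 with hadef
    have ha1 : 1 ≤ a := by omega
    have han : a ≤ n - 1 := by omega
    set r := n - 1 - a with hrdef
    have hnar : n = a + r + 1 := by omega
    have hstep : ∑ k ∈ Icc 1 a, a.choose k * (k.factorial * (n-k).factorial)
        = ∑ k ∈ Icc 1 a, a.choose k * (k.factorial * (a+r+1-k).factorial) := by
      refine Finset.sum_congr rfl fun k hk => ?_
      rw [mem_Icc] at hk
      rw [show n - k = a+r+1-k by omega]
    rw [hstep, inner_eq a r ha1, Finset.mul_sum]
    refine Finset.sum_congr rfl fun ℓ hℓ => ?_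
    rw [mem_Icc] at hℓ
    have hsub1 : n - i + 1 = r + 1 := by omega
    have hsub2 : n - i = r := by omega
    have hchoose1 : (n-i+1).choose (n-i) = r + 1 := by
      rw [hsub1, hsub2, Nat.choose_succ_self_right]
    have hc2 : (n-ℓ-1).choose (a-ℓ) * (a-ℓ).factorial * r.factorial
        = (n-ℓ-1).factorial := by
      have h := Nat.choose_mul_factorial_mul_factorial (show a-ℓ ≤ n-ℓ-1 by omega)
      rwa [show n-ℓ-1-(a-ℓ) = r by omega] at h
    have hfl : (a+r-ℓ).factorial = (n-ℓ-1).factorial := by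
      rw [show a+r-ℓ = n-ℓ-1 by omega]
    rw [hchoose1, hsub2, hfl, ← hc2]
    ring

/-- For `n ≥ 2`, the number of preference lists in `[n]^n` with exactly `n-1` lucky
cars in which the unique unlucky car is unable to park equals
`∑_{i=2}^n ∑_{ℓ=1}^{i-1} ℓ C(i-1,ℓ) ℓ! C(n-ℓ-1,i-1-ℓ) (i-1-ℓ)! C(n-i+1,n-i) (n-i)!`. -/
theorem count_unlucky_fails_to_park (n : ℕ) (hn : 2 ≤ n) :
    (Finset.univ.filter (fun α : Fin n → Fin n =>
        (luckyCount α : ℤ) = (n : ℤ) - 1 ∧ ∃ i : Fin n, carSpot α i = none)).card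
      = ∑ i ∈ Finset.Icc 2 n, ∑ ℓ ∈ Finset.Icc 1 (i - 1),
          ℓ * Nat.choose (i - 1) ℓ * Nat.factorial ℓ
            * Nat.choose (n - ℓ - 1) (i - 1 - ℓ) * Nat.factorial (i - 1 - ℓ)
            * Nat.choose (n - i + 1) (n - i) * Nat.factorial (n - i) := by
  rw [total_card (by omega)]
  exact final_sum n hn
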